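/- arXiv:1606.00507 — 2 statements merged into one kernel-verified Lean document; each statement's English description precedes it below -/
import Mathlib

section
/- Define psi(r1,r2,r3,L) = 1 if (r1,r2,r3) is a lattice point of P_3(L) (integers with even sum, nonnegative, satisfying the triangle inequalities and r1+r2+r3 <= 2L) and 0 otherwise. Then psi(r1,r2,r3,L) = psi(L-r1, L-r2, r3, L) for all integers 0 <= r1, r2 <= L. -/
/-- `psi r1 r2 r3 L` is `1` if `(r1, r2, r3)` is a lattice point of `P_3(L)`
(nonnegative, even coordinate sum, triangle inequalities, sum at most `2L`)
and `0` otherwise. -/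
def psi (r1 r2 r3 L : ℤ) : ℕ :=
  if (r1 + r2 + r3) % 2 = 0 ∧ 0 ≤ r1 ∧ 0 ≤ r2 ∧ 0 ≤ r3 ∧
      r1 ≤ r2 + r3 ∧ r2 ≤ r1 + r3 ∧ r3 ≤ r1 + r2 ∧ r1 + r2 + r3 ≤ 2 * L
  then 1 else 0

/- The reflection `(r1, r2) ↦ (L - r1, L - r2)` changes the coordinate sum by the even number
`2L - 2r1 - 2r2`, keeps `|r1 - r2|` (so the two triangle inequalities bounding `r3` from below),
and exchanges the constraints `r3 ≤ r1 + r2` and `r1 + r2 + r3 ≤ 2L`. -/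
theorem stmt_9_general (L r1 r2 r3 : ℤ)
    (h1 : 0 ≤ r1) (h1' : r1 ≤ L) (h2 : 0 ≤ r2) (h2' : r2 ≤ L) :
    psi r1 r2 r3 L = psi (L - r1) (L - r2) r3 L := by
  unfold psi
  exact if_congr (by omega) rfl rfl

theorem stmt_9 (L r1 r2 r3 : ℤ) (hL : 0 ≤ L)
    (h1 : 0 ≤ r1) (h1' : r1 ≤ L) (h2 : 0 ≤ r2) (h2' : r2 ≤ L) :
    psi r1 r2 r3 L = psi (L - r1) (L - r2) r3 L :=
  stmt_9_general L r1 r2 r3 h1 h1' h2 h2'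
end

section
/- Every lattice point of P_3(L) (nonnegative integers x,y,z with even sum, triangle inequalities, x+y+z <= 2L) can be written as a sum of L lattice points of P_3(1), where the lattice points of P_3(1) are exactly (0,0,0), (1,1,0), (1,0,1), (0,1,1). -/
/-! With `a = (x + y - z) / 2`, `b = (x + z - y) / 2`, `c = (y + z - x) / 2`, which are
natural numbers by the triangle inequalities and the parity condition, the point `(x, y, z)`
equals `a • (1, 1, 0) + b • (1, 0, 1) + c • (0, 1, 1)`. Since `a + b + c = (x + y + z) / 2 ≤ L`,
this is a sum of `L` lattice points of `P_3(1)` once it is padded with copies of `(0, 0, 0)`. -/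

open scoped Pointwise

namespace Set

variable {M : Type*} [AddCommMonoid M] {S : Set M}

theorem mem_nsmul_iff_exists_fin_sum {n : ℕ} {m : M} :
    m ∈ n • S ↔ ∃ f : Fin n → M, (∀ i, f i ∈ S) ∧ ∑ i, f i = m := by
  rw [mem_nsmul]
  constructor
  · rintro ⟨f, rfl⟩
    exact ⟨fun i ↦ f i, fun i ↦ (f i).2, List.sum_ofFn.symm⟩
  · rintro ⟨f, hfS, rfl⟩
    exact ⟨fun i ↦ ⟨f i, hfS i⟩, List.sum_ofFn⟩

theorem nsmul_add_nsmul_add_nsmul_mem_nsmul (h0 : 0 ∈ S) {u v w : M}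
    (hu : u ∈ S) (hv : v ∈ S) (hw : w ∈ S) {a b c L : ℕ} (hL : a + b + c ≤ L) :
    a • u + b • v + c • w ∈ L • S := by
  refine nsmul_subset_nsmul_right h0 hL ?_
  rw [add_nsmul, add_nsmul]
  exact add_mem_add (add_mem_add (nsmul_mem_nsmul hu) (nsmul_mem_nsmul hv)) (nsmul_mem_nsmul hw)

end Set

theorem stmt_11_general (L : ℕ) (x y z : ℤ)
    (hpar : Even (x + y + z))
    (h1 : x ≤ y + z) (h2 : y ≤ x + z) (h3 : z ≤ x + y)
    (hsum : x + y + z ≤ 2 * L) :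
    ∃ f : Fin L → ℤ × ℤ × ℤ,
      (∀ i, f i ∈ ({(0, 0, 0), (1, 1, 0), (1, 0, 1), (0, 1, 1)} :
        Set (ℤ × ℤ × ℤ))) ∧ ∑ i, f i = (x, y, z) := by
  obtain ⟨k, hk⟩ := hpar
  obtain ⟨a, ha⟩ : ∃ a : ℕ, (a : ℤ) = (x + y - z) / 2 :=
    ⟨_, Int.toNat_of_nonneg (by omega)⟩
  obtain ⟨b, hb⟩ : ∃ b : ℕ, (b : ℤ) = (x + z - y) / 2 :=
    ⟨_, Int.toNat_of_nonneg (by omega)⟩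
  obtain ⟨c, hc⟩ : ∃ c : ℕ, (c : ℤ) = (y + z - x) / 2 :=
    ⟨_, Int.toNat_of_nonneg (by omega)⟩
  have hxyz : a • ((1, 1, 0) : ℤ × ℤ × ℤ) + b • (1, 0, 1) + c • (0, 1, 1) = (x, y, z) := by
    simp only [Prod.smul_mk, nsmul_eq_mul, Prod.mk_add_mk, Prod.mk.injEq]
    omega
  rw [← Set.mem_nsmul_iff_exists_fin_sum, ← hxyz]
  exact Set.nsmul_add_nsmul_add_nsmul_mem_nsmul (by simp [Prod.zero_eq_mk])
    (by simp) (by simp) (by simp) (by omega)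

theorem stmt_11 (L : ℕ) (hL : 0 < L) (x y z : ℤ)
    (hx : 0 ≤ x) (hy : 0 ≤ y) (hz : 0 ≤ z) (hpar : Even (x + y + z))
    (h1 : x ≤ y + z) (h2 : y ≤ x + z) (h3 : z ≤ x + y)
    (hsum : x + y + z ≤ 2 * L) :
    ∃ f : Fin L → ℤ × ℤ × ℤ,
      (∀ i, f i ∈ ({(0, 0, 0), (1, 1, 0), (1, 0, 1), (0, 1, 1)} :
        Set (ℤ × ℤ × ℤ))) ∧ ∑ i, f i = (x, y, z) :=
  stmt_11_general L x y z hpar h1 h2 h3 hsum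
end
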